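/- There exists a bounded set E ⊆ ℝ² such that dim_qA E = 1/2 while dim_qA π_x(E) = 1, where π_x : ℝ² → ℝ is the orthogonal projection onto the first coordinate, π_x(x,y) = x. In particular, the quasi-Assouad dimension can strictly increase under a Lipschitz map (an orthogonal projection). -/

import Mathlib

open Metric Filter Set
open scoped ENNReal

/-- `N_r(A)`: the least number of closed balls of radius `r` needed to cover `A`. -/
noncomputable def coverNum {X : Type*} [PseudoMetricSpace X] (A : Set X) (r : ℝ) : ℕ :=
  sInf {n : ℕ | ∃ S : Finset X, S.card = n ∧ A ⊆ ⋃ x ∈ S, closedBall x r}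

/-- `N_{r,R}(E) = sup_{x ∈ E} N_r(E ∩ B(x,R))`. -/
noncomputable def coverNumLoc {X : Type*} [PseudoMetricSpace X] (E : Set X) (r R : ℝ) : ℕ :=
  sSup {n : ℕ | ∃ x ∈ E, n = coverNum (E ∩ closedBall x R) r}

/-- Upper box dimension `limsup_{r → 0⁺} log N_r(E) / log (1/r)`. -/
noncomputable def upperBoxDim {X : Type*} [PseudoMetricSpace X] (E : Set X) : ℝ :=
  limsup (fun r : ℝ => Real.log (coverNum E r) / Real.log (1 / r)) (nhdsWithin 0 (Ioi 0))

/-- Lower box dimension `liminf_{r → 0⁺} log N_r(E) / log (1/r)`. -/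
noncomputable def lowerBoxDim {X : Type*} [PseudoMetricSpace X] (E : Set X) : ℝ :=
  liminf (fun r : ℝ => Real.log (coverNum E r) / Real.log (1 / r)) (nhdsWithin 0 (Ioi 0))

/-- `h̄_E(δ)`: the infimum of all `α ≥ 0` such that for some `b, c > 0`,
`N_{r,R}(E) ≤ c (R/r)^α` whenever `0 < r ≤ R^{1+δ} ≤ R ≤ b`. -/
noncomputable def hUpper {X : Type*} [PseudoMetricSpace X] (E : Set X) (δ : ℝ) : ℝ :=
  sInf {α : ℝ | 0 ≤ α ∧ ∃ b c : ℝ, 0 < b ∧ 0 < c ∧ ∀ r R : ℝ,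
    0 < r → r ≤ R ^ (1 + δ) → R ^ (1 + δ) ≤ R → R ≤ b →
    (coverNumLoc E r R : ℝ) ≤ c * (R / r) ^ α}

/-- `h̲_E(δ)`: the supremum of all `α ≥ 0` such that for some `b, c > 0`,
`N_{r,R}(E) ≥ c (R/r)^α` whenever `0 < r ≤ R^{1+δ} ≤ R ≤ b`. -/
noncomputable def hLower {X : Type*} [PseudoMetricSpace X] (E : Set X) (δ : ℝ) : ℝ :=
  sSup {α : ℝ | 0 ≤ α ∧ ∃ b c : ℝ, 0 < b ∧ 0 < c ∧ ∀ r R : ℝ,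
    0 < r → r ≤ R ^ (1 + δ) → R ^ (1 + δ) ≤ R → R ≤ b →
    c * (R / r) ^ α ≤ (coverNumLoc E r R : ℝ)}

/-- The quasi-Assouad dimension `dim_qA E = lim_{δ → 0⁺} h̄_E(δ)`; since `h̄_E` is
nonincreasing this limit equals the supremum over `δ ∈ (0,1)`. -/
noncomputable def qADim {X : Type*} [PseudoMetricSpace X] (E : Set X) : ℝ :=
  sSup (hUpper E '' Ioo (0:ℝ) 1)

/-- The quasi-lower Assouad dimension `dim_qL E = lim_{δ → 0⁺} h̲_E(δ)`; since `h̲_E` is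
nondecreasing this limit equals the infimum over `δ ∈ (0,1)`. -/
noncomputable def qLDim {X : Type*} [PseudoMetricSpace X] (E : Set X) : ℝ :=
  sInf (hLower E '' Ioo (0:ℝ) 1)

/-- Assouad dimension `dim_A E = h̄_E(0)`. -/
noncomputable def assouadDim {X : Type*} [PseudoMetricSpace X] (E : Set X) : ℝ := hUpper E 0

/-- Lower (Assouad) dimension `dim_L E = h̲_E(0)`. -/
noncomputable def lowerAssouadDim {X : Type*} [PseudoMetricSpace X] (E : Set X) : ℝ := hLower E 0

/-!
The set `E` is a union of blocks. Block `k` is a comb of `2 ^ k²` teeth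
`(2⁻ᵏ + j η, 3 η s(j))`, `j < 2 ^ k²`, where `η = 2 ^ (-k - 2k² - 1)` and `s(j)` is `j` written in
binary and read in base `4`. Two teeth whose indices agree up to the last `s` binary digits are
`≲ η 4 ^ s` apart, and two teeth whose indices differ before that are `≳ η 4 ^ s` apart; so every
block looks `1/2`-dimensional at all scales between `η` and its size `2⁻ᵏ⁻¹`, and summing a
geometric series over the blocks gives `N_{r,R}(E) ≲ √(R / r)`, with equality up to constants for a
whole block. Projecting kills the second coordinate: block `k` becomes an arithmetic progression of
`2 ^ k²` points at spacing `η`, which has `N_{r,R} ≈ R / r` (the maximum possible on the line) at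
`r ≈ η`, `R ≈ 2 ^ k² η`. These scales satisfy `r ≤ R ^ (1 + δ)` for large `k` as soon as `δ < 1`,
so `dim_qA π(E) = 1`.
-/
open Topology

section Covering

variable {X : Type*} [PseudoMetricSpace X]

lemma coverNum_le_card {A : Set X} {r : ℝ} (S : Finset X) (h : A ⊆ ⋃ x ∈ S, closedBall x r) :
    coverNum A r ≤ S.card :=
  Nat.sInf_le ⟨S, rfl, h⟩

lemma exists_coverNum_eq_card {A : Set X} {r : ℝ}
    (h : ∃ S : Finset X, A ⊆ ⋃ x ∈ S, closedBall x r) :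
    ∃ S : Finset X, S.card = coverNum A r ∧ A ⊆ ⋃ x ∈ S, closedBall x r := by
  obtain ⟨S, hS⟩ := h
  exact Nat.sInf_mem (s := {n | ∃ S : Finset X, S.card = n ∧ A ⊆ ⋃ x ∈ S, closedBall x r})
    ⟨S.card, S, rfl, hS⟩

lemma Bornology.IsBounded.exists_finset_cover [ProperSpace X] {A : Set X}
    (hA : Bornology.IsBounded A) {r : ℝ} (hr : 0 < r) :
    ∃ S : Finset X, A ⊆ ⋃ x ∈ S, closedBall x r := by
  obtain ⟨t, -, ht, hcov⟩ :=
    exists_finite_cover_balls_of_isCompact_closure hA.isCompact_closure hr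
  refine ⟨ht.toFinset, hcov.trans ?_⟩
  simp only [Set.Finite.mem_toFinset]
  exact iUnion₂_mono fun x _ => ball_subset_closedBall

lemma coverNum_mono [ProperSpace X] {A B : Set X} {r : ℝ} (hr : 0 < r) (hAB : A ⊆ B)
    (hB : Bornology.IsBounded B) : coverNum A r ≤ coverNum B r := by
  obtain ⟨S, hcard, hcov⟩ := exists_coverNum_eq_card (hB.exists_finset_cover hr)
  exact hcard ▸ coverNum_le_card S (hAB.trans hcov)

lemma card_le_coverNum [ProperSpace X] {A : Set X} {r : ℝ} (hr : 0 < r)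
    (hA : Bornology.IsBounded A) (T : Finset X) (hTA : ↑T ⊆ A)
    (hT : (T : Set X).Pairwise fun v w => 2 * r < dist v w) : T.card ≤ coverNum A r := by
  classical
  obtain ⟨S, hcard, hcov⟩ := exists_coverNum_eq_card (hA.exists_finset_cover hr)
  have hsub : T ⊆ S.biUnion fun s => T.filter (· ∈ closedBall s r) := by
    intro v hv
    obtain ⟨s, hs, hvs⟩ := mem_iUnion₂.mp (hcov (hTA hv))
    exact Finset.mem_biUnion.mpr ⟨s, hs, Finset.mem_filter.mpr ⟨hv, hvs⟩⟩
  have hone : ∀ s, (T.filter (· ∈ closedBall s r)).card ≤ 1 := by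
    refine fun s => Finset.card_le_one.mpr fun v hv w hw => ?_
    simp only [Finset.mem_filter, mem_closedBall] at hv hw
    by_contra hvw
    have := hT hv.1 hw.1 hvw
    linarith [dist_triangle_right v w s]
  calc T.card ≤ _ := Finset.card_le_card hsub
    _ ≤ ∑ s ∈ S, (T.filter (· ∈ closedBall s r)).card := Finset.card_biUnion_le
    _ ≤ ∑ _s ∈ S, 1 := Finset.sum_le_sum fun s _ => hone s
    _ = coverNum A r := by simp [hcard]

/-- A maximal `r`-separated subset of `A` is an `r`-net of `A`. -/
lemma coverNum_le_of_separated {A : Set X} {r : ℝ} (hr : 0 ≤ r) (N : ℕ)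
    (h : ∀ T : Finset X, ↑T ⊆ A → (T : Set X).Pairwise (fun v w => r < dist v w) → T.card ≤ N) :
    coverNum A r ≤ N := by
  classical
  by_contra! hN
  have key : ∀ n ≤ N + 1, ∃ T : Finset X, ↑T ⊆ A ∧
      (T : Set X).Pairwise (fun v w => r < dist v w) ∧ T.card = n := by
    intro n hn
    induction n with
    | zero => exact ⟨∅, by simp⟩
    | succ n ih =>
      obtain ⟨T, hTA, hT, rfl⟩ := ih (by omega)
      have hcov : ¬ A ⊆ ⋃ x ∈ T, closedBall x r := fun hcov =>
        (coverNum_le_card T hcov).not_gt (by omega)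
      obtain ⟨a, ha, haT⟩ := not_subset.mp hcov
      simp only [mem_iUnion₂, mem_closedBall, not_exists, not_le] at haT
      refine ⟨insert a T, ?_, ?_, Finset.card_insert_of_notMem fun h => ?_⟩
      · simpa [insert_subset_iff] using ⟨ha, hTA⟩
      · rw [Finset.coe_insert]
        exact hT.insert fun w hw _ => ⟨haT w hw, dist_comm a w ▸ haT w hw⟩
      · linarith [haT a h, dist_self a]
  obtain ⟨T, hTA, hT, hcard⟩ := key (N + 1) le_rfl
  have := h T hTA hT
  omega

end Covering

section LocalCovering

variable {X : Type*} [PseudoMetricSpace X] {E : Set X} {r R : ℝ}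

lemma coverNumLoc_le {c : ℝ} (hc : 0 ≤ c)
    (h : ∀ x ∈ E, (coverNum (E ∩ closedBall x R) r : ℝ) ≤ c) : (coverNumLoc E r R : ℝ) ≤ c := by
  refine le_trans (Nat.cast_le.mpr (csSup_le' (a := ⌊c⌋₊) ?_)) (Nat.floor_le hc)
  rintro _ ⟨x, hx, rfl⟩
  exact Nat.le_floor (h x hx)

lemma coverNum_le_coverNumLoc [ProperSpace X] (hE : Bornology.IsBounded E) (hr : 0 < r)
    {x : X} (hx : x ∈ E) : coverNum (E ∩ closedBall x R) r ≤ coverNumLoc E r R :=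
  le_csSup ⟨coverNum E r, by rintro _ ⟨y, -, rfl⟩; exact coverNum_mono hr inter_subset_left hE⟩
    ⟨x, hx, rfl⟩

lemma le_coverNumLoc_of_separated [ProperSpace X] (hE : Bornology.IsBounded E) (hr : 0 < r)
    {x : X} (hx : x ∈ E) {n : ℕ} (f : ℕ → X) (hf : ∀ j < n, f j ∈ E ∩ closedBall x R)
    (hsep : ∀ i < n, ∀ j < n, i ≠ j → 2 * r < dist (f i) (f j)) : n ≤ coverNumLoc E r R := by
  classical
  have hinj : Set.InjOn f (Finset.range n) := fun i hi j hj hij => by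
    by_contra hne
    have := hsep i (by simpa using hi) j (by simpa using hj) hne
    rw [hij, dist_self] at this
    linarith
  calc n = ((Finset.range n).image f).card := by
        rw [Finset.card_image_of_injOn hinj, Finset.card_range]
    _ ≤ coverNum (E ∩ closedBall x R) r := by
        refine card_le_coverNum hr (hE.subset inter_subset_left) _ ?_ ?_
        · rw [Finset.coe_image, Finset.coe_range]
          rintro _ ⟨j, hj, rfl⟩
          exact hf j hj
        · simp only [Finset.coe_image, Finset.coe_range]
          rintro _ ⟨i, hi, rfl⟩ _ ⟨j, hj, rfl⟩ hij
          exact hsep i hi j hj fun h => hij (h ▸ rfl)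
    _ ≤ coverNumLoc E r R := coverNum_le_coverNumLoc hE hr hx

end LocalCovering

section RealLine

lemma coverNum_le_of_subset_closedBall {A : Set ℝ} {x r R : ℝ} (hr : 0 < r) (hR : 0 ≤ R)
    (hA : A ⊆ closedBall x R) : (coverNum A r : ℝ) ≤ R / r + 1 := by
  classical
  set N := ⌊R / r⌋₊ + 1
  have hcov : A ⊆ ⋃ c ∈ (Finset.range N).image fun i : ℕ => x - R + (2 * i + 1) * r,
      closedBall c r := by
    intro y hy
    obtain ⟨hy₁, hy₂⟩ := abs_le.mp (mem_closedBall.mp (hA hy))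
    have h2r : 0 < 2 * r := by positivity
    set i := ⌊(y - (x - R)) / (2 * r)⌋₊
    have hi₁ := (le_div_iff₀ h2r).mp
      (Nat.floor_le (div_nonneg (by linarith : (0 : ℝ) ≤ y - (x - R)) h2r.le))
    have hi₂ := (div_lt_iff₀ h2r).mp (Nat.lt_floor_add_one ((y - (x - R)) / (2 * r)))
    have hiN : i < N := Nat.lt_succ_of_le <| Nat.floor_le_floor <| by
      rw [div_le_div_iff₀ h2r hr]
      nlinarith
    refine mem_iUnion₂.mpr ⟨_, Finset.mem_image_of_mem _ (Finset.mem_range.mpr hiN), ?_⟩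
    rw [mem_closedBall, Real.dist_eq, abs_le]
    constructor <;> nlinarith
  calc (coverNum A r : ℝ) ≤ N := by
        exact_mod_cast (coverNum_le_card _ hcov).trans
          (Finset.card_image_le.trans_eq (Finset.card_range N))
    _ ≤ R / r + 1 := by
        push_cast [N]
        linarith [Nat.floor_le (div_nonneg hR hr.le)]

lemma coverNumLoc_real_le {E : Set ℝ} {r R : ℝ} (hr : 0 < r) (hrR : r ≤ R) :
    (coverNumLoc E r R : ℝ) ≤ 2 * (R / r) ^ (1 : ℝ) := by
  rw [Real.rpow_one]
  have : 1 ≤ R / r := (one_le_div hr).mpr hrR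
  exact coverNumLoc_le (by positivity) fun x _ =>
    (coverNum_le_of_subset_closedBall hr (hr.le.trans hrR) inter_subset_right).trans (by linarith)

end RealLine

section Exponents

variable {X : Type*} [PseudoMetricSpace X] {E : Set X} {δ α : ℝ}

def upperExponents (E : Set X) (δ : ℝ) : Set ℝ :=
  {α : ℝ | 0 ≤ α ∧ ∃ b c : ℝ, 0 < b ∧ 0 < c ∧ ∀ r R : ℝ,
    0 < r → r ≤ R ^ (1 + δ) → R ^ (1 + δ) ≤ R → R ≤ b →
    (coverNumLoc E r R : ℝ) ≤ c * (R / r) ^ α}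

lemma IsLeast.hUpper_eq (h : IsLeast (upperExponents E δ) α) : hUpper E δ = α :=
  h.csInf_eq

lemma mem_upperExponents {C : ℝ} (hα : 0 ≤ α) (hC : 0 < C)
    (h : ∀ r R, 0 < r → r ≤ R → (coverNumLoc E r R : ℝ) ≤ C * (R / r) ^ α) :
    α ∈ upperExponents E δ :=
  ⟨hα, 1, C, one_pos, hC, fun r R hr h₁ h₂ _ => h r R hr (h₁.trans h₂)⟩

lemma le_of_mem_upperExponents {r R : ℕ → ℝ} {a β : ℝ} (ha : 0 < a)
    (hadm : ∀ᶠ k in atTop, 0 < r k ∧ r k ≤ R k ^ (1 + δ) ∧ R k ^ (1 + δ) ≤ R k)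
    (hR : Tendsto R atTop (𝓝 0)) (hratio : Tendsto (fun k => R k / r k) atTop atTop)
    (hN : ∀ᶠ k in atTop, a * (R k / r k) ^ α ≤ coverNumLoc E (r k) (R k))
    (hβ : β ∈ upperExponents E δ) : α ≤ β := by
  by_contra! hβα
  obtain ⟨-, b, c, hb, -, hbound⟩ := hβ
  have hbig := ((tendsto_rpow_atTop (sub_pos.2 hβα)).comp hratio).eventually_gt_atTop (c / a)
  obtain ⟨k, ⟨hr, h₁, h₂⟩, hRb, hNk, hbigk, hpos⟩ := (hadm.and <|
    (hR.eventually (ge_mem_nhds hb)).and <| hN.and <| hbig.and <|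
      hratio.eventually_gt_atTop 0).exists
  have hle : a * (R k / r k) ^ (α - β) * (R k / r k) ^ β ≤ c * (R k / r k) ^ β := by
    rw [mul_assoc, ← Real.rpow_add hpos, sub_add_cancel]
    exact hNk.trans (hbound _ _ hr h₁ h₂ hRb)
  have := le_of_mul_le_mul_right hle (Real.rpow_pos_of_pos hpos β)
  rw [Function.comp_apply, div_lt_iff₀' ha] at hbigk
  linarith

lemma qADim_eq_of_forall_hUpper_eq (h : ∀ δ ∈ Ioo (0 : ℝ) 1, hUpper E δ = α) : qADim E = α := by
  rw [qADim, image_congr h, (nonempty_Ioo.mpr one_pos).image_const, csSup_singleton]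

end Exponents

namespace QuasiAssouadProjection

local notation "ℝ²" => EuclideanSpace ℝ (Fin 2)

def bitSpread (n : ℕ) : ℕ := Nat.ofDigits 4 (Nat.digits 2 n)

lemma bitSpread_eq (n : ℕ) : bitSpread n = 4 * bitSpread (n / 2) + n % 2 := by
  rcases Nat.eq_zero_or_pos n with rfl | hn
  · simp [bitSpread]
  · rw [bitSpread, Nat.digits_def' one_lt_two hn, Nat.ofDigits_cons, bitSpread]
    ring

lemma bitSpread_two_mul_add (n b : ℕ) (hb : b < 2) :
    bitSpread (2 * n + b) = 4 * bitSpread n + b := by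
  rw [bitSpread_eq, show (2 * n + b) / 2 = n by omega, show (2 * n + b) % 2 = b by omega]

lemma bitSpread_strictMono : StrictMono bitSpread := by
  refine strictMono_nat_of_lt_succ fun n => ?_
  induction n using Nat.strong_induction_on with
  | _ n ih =>
    have h₁ := bitSpread_two_mul_add (n / 2) 1 one_lt_two
    obtain ⟨a, rfl | rfl⟩ := Nat.even_or_odd' n
    · have h₀ := bitSpread_two_mul_add a 0 two_pos
      simp only [add_zero, Nat.mul_div_cancel_left a two_pos] at h₀ h₁
      omega
    · have h₂ := bitSpread_two_mul_add (a + 1) 0 two_pos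
      rw [add_zero, show 2 * (a + 1) = 2 * a + 1 + 1 by ring] at h₂
      rw [show (2 * a + 1) / 2 = a by omega] at h₁
      have := ih a (by omega)
      omega

lemma bitSpread_add_mul_two_pow (q s l : ℕ) (hl : l < 2 ^ s) :
    bitSpread (2 ^ s * q + l) = 4 ^ s * bitSpread q + bitSpread l := by
  induction s generalizing l with
  | zero => simp_all [bitSpread]
  | succ s ih =>
    have h := bitSpread_two_mul_add (2 ^ s * q + l / 2) (l % 2) (Nat.mod_lt _ two_pos)
    rw [show 2 * (2 ^ s * q + l / 2) + l % 2 = 2 ^ (s + 1) * q + l by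
      rw [pow_succ]; ring_nf; omega, ih _ (by rw [pow_succ] at hl; omega)] at h
    rw [h, bitSpread_eq l, pow_succ]
    ring

lemma three_mul_bitSpread_lt (s l : ℕ) (hl : l < 2 ^ s) : 3 * bitSpread l < 4 ^ s := by
  induction s generalizing l with
  | zero => simp_all [bitSpread]
  | succ s ih =>
    have := ih (l / 2) (by rw [pow_succ] at hl; omega)
    rw [bitSpread_eq, pow_succ]
    omega

lemma bitSpread_eq_of_div_two_pow (s n : ℕ) :
    bitSpread n = 4 ^ s * bitSpread (n / 2 ^ s) + bitSpread (n % 2 ^ s) := by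
  conv_lhs => rw [← Nat.div_add_mod n (2 ^ s)]
  exact bitSpread_add_mul_two_pow _ _ _ (Nat.mod_lt _ (Nat.two_pow_pos s))

lemma three_mul_bitSpread_lt_of_div_eq {s i j : ℕ} (h : i / 2 ^ s = j / 2 ^ s) :
    3 * bitSpread i < 3 * bitSpread j + 4 ^ s := by
  have := three_mul_bitSpread_lt s _ (Nat.mod_lt i (Nat.two_pow_pos s))
  rw [bitSpread_eq_of_div_two_pow s i, bitSpread_eq_of_div_two_pow s j, h]
  omega

lemma three_mul_bitSpread_add_lt_of_div_lt {s i j : ℕ} (h : i / 2 ^ s < j / 2 ^ s) :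
    3 * bitSpread i + 2 * 4 ^ s < 3 * bitSpread j := by
  have hi := three_mul_bitSpread_lt s _ (Nat.mod_lt i (Nat.two_pow_pos s))
  have hmono := Nat.mul_le_mul_left (4 ^ s) (bitSpread_strictMono h)
  rw [bitSpread_eq_of_div_two_pow s i, bitSpread_eq_of_div_two_pow s j]
  rw [Nat.mul_succ] at hmono
  omega

lemma dist_le_abs_add_abs (v w : ℝ²) : dist v w ≤ |v 0 - w 0| + |v 1 - w 1| := by
  rw [EuclideanSpace.dist_eq, Fin.sum_univ_two, Real.sqrt_le_left (by positivity)]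
  simp only [Real.dist_eq, sq_abs]
  nlinarith [abs_nonneg (v 0 - w 0), abs_nonneg (v 1 - w 1), sq_abs (v 0 - w 0),
    sq_abs (v 1 - w 1)]

lemma abs_sub_le_dist (v w : ℝ²) (i : Fin 2) : |v i - w i| ≤ dist v w := by
  simpa only [Real.dist_eq] using PiLp.dist_apply_le v w i

lemma exists_le_mul_pow {a b : ℝ} (ha : 0 < a) (hb : 1 < b) (y : ℝ) :
    ∃ n : ℕ, y ≤ a * b ^ n ∧ (n = 0 ∨ a * b ^ n < b * y) := by
  classical
  have hex : ∃ n : ℕ, y ≤ a * b ^ n := by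
    obtain ⟨n, hn⟩ := pow_unbounded_of_one_lt (y / a) hb
    exact ⟨n, by rw [div_lt_iff₀' ha] at hn; exact hn.le⟩
  refine ⟨Nat.find hex, Nat.find_spec hex, ?_⟩
  rcases hn : Nat.find hex with _ | m
  · exact .inl rfl
  · have hmin := not_le.mp (Nat.find_min hex (m := m) (by omega))
    rw [pow_succ, ← mul_assoc, mul_comm b y]
    exact .inr (mul_lt_mul_of_pos_right hmin (by linarith))

lemma card_le_two_pow_sub {s t : ℕ} (J : Finset ℕ) (hinj : Set.InjOn (· / 2 ^ s) J)
    (hconst : ∀ i ∈ J, ∀ j ∈ J, i / 2 ^ t = j / 2 ^ t) : J.card ≤ 2 ^ (t - s) := by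
  classical
  rcases J.eq_empty_or_nonempty with rfl | ⟨i₀, hi₀⟩
  · simp
  set Q := i₀ / 2 ^ max s t
  have hQ : ∀ j ∈ J, j / 2 ^ s / 2 ^ (t - s) = Q := by
    intro j hj
    rw [Nat.div_div_eq_div_mul, ← pow_add, show s + (t - s) = t + (max s t - t) by omega,
      pow_add, ← Nat.div_div_eq_div_mul, hconst j hj i₀ hi₀, Nat.div_div_eq_div_mul, ← pow_add,
      show t + (max s t - t) = max s t by omega]
  have hmaps : ∀ j ∈ J,
      j / 2 ^ s ∈ Finset.Ico (Q * 2 ^ (t - s)) (Q * 2 ^ (t - s) + 2 ^ (t - s)) := by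
    intro j hj
    have := Nat.div_add_mod' (j / 2 ^ s) (2 ^ (t - s))
    have := Nat.mod_lt (j / 2 ^ s) (Nat.two_pow_pos (t - s))
    rw [hQ j hj] at *
    rw [Finset.mem_Ico]
    omega
  simpa using Finset.card_le_card_of_injOn _ hmaps hinj

noncomputable def combPt (u η : ℝ) (j : ℕ) : ℝ² := !₂[u + j * η, 3 * η * bitSpread j]

@[simp] lemma combPt_zero (u η : ℝ) (j : ℕ) : combPt u η j 0 = u + j * η := rfl
@[simp] lemma combPt_one (u η : ℝ) (j : ℕ) : combPt u η j 1 = 3 * η * bitSpread j := rfl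

variable {u η : ℝ}

lemma combPt_injective (hη : 0 < η) : Function.Injective (combPt u η) := fun i j h => by
  have := congrArg (· 0) h
  simp only [combPt_zero, add_right_inj, mul_left_inj' hη.ne'] at this
  exact_mod_cast this

lemma dist_combPt_lt {s i j : ℕ} (hη : 0 < η) (h : i / 2 ^ s = j / 2 ^ s) :
    dist (combPt u η i) (combPt u η j) < 2 * η * 4 ^ s := by
  have hi := Nat.div_add_mod i (2 ^ s)
  have hj := Nat.div_add_mod j (2 ^ s)
  have := Nat.mod_lt i (Nat.two_pow_pos s)
  have := Nat.mod_lt j (Nat.two_pow_pos s)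
  rw [h] at hi
  generalize 2 ^ s * (j / 2 ^ s) = m at hi hj
  have hij : |(i : ℝ) - j| < 2 ^ s := by
    have h₁ : (i : ℝ) < j + 2 ^ s := by exact_mod_cast (by omega : i < j + 2 ^ s)
    have h₂ : (j : ℝ) < i + 2 ^ s := by exact_mod_cast (by omega : j < i + 2 ^ s)
    rw [abs_sub_lt_iff]
    constructor <;> linarith
  have hg : |3 * (bitSpread i : ℝ) - 3 * bitSpread j| < 4 ^ s := by
    have h₁ : 3 * (bitSpread i : ℝ) < 3 * bitSpread j + 4 ^ s := by
      exact_mod_cast three_mul_bitSpread_lt_of_div_eq h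
    have h₂ : 3 * (bitSpread j : ℝ) < 3 * bitSpread i + 4 ^ s := by
      exact_mod_cast three_mul_bitSpread_lt_of_div_eq h.symm
    rw [abs_sub_lt_iff]
    constructor <;> linarith
  have h24 : (2 : ℝ) ^ s ≤ 4 ^ s := pow_le_pow_left₀ (by norm_num) (by norm_num) s
  have hx : |combPt u η i 0 - combPt u η j 0| < η * 4 ^ s := by
    rw [combPt_zero, combPt_zero, show u + i * η - (u + j * η) = η * (i - j) by ring, abs_mul,
      abs_of_pos hη]
    nlinarith
  have hy : |combPt u η i 1 - combPt u η j 1| < η * 4 ^ s := by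
    rw [combPt_one, combPt_one, show 3 * η * bitSpread i - 3 * η * bitSpread j
      = η * (3 * (bitSpread i : ℝ) - 3 * bitSpread j) by ring, abs_mul, abs_of_pos hη]
    exact mul_lt_mul_of_pos_left hg hη
  linarith [dist_le_abs_add_abs (combPt u η i) (combPt u η j)]

lemma lt_dist_combPt {s i j : ℕ} (hη : 0 < η) (h : i / 2 ^ s ≠ j / 2 ^ s) :
    2 * η * 4 ^ s < dist (combPt u η i) (combPt u η j) := by
  wlog hlt : i / 2 ^ s < j / 2 ^ s generalizing i j
  · rw [dist_comm]
    exact this h.symm (lt_of_le_of_ne (not_lt.mp hlt) h.symm)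
  have hg := (Nat.cast_lt (α := ℝ)).mpr (three_mul_bitSpread_add_lt_of_div_lt hlt)
  push_cast at hg
  have hy := abs_sub_le_dist (combPt u η j) (combPt u η i) 1
  rw [combPt_one, combPt_one, dist_comm] at hy
  have := le_abs_self (3 * η * (bitSpread j : ℝ) - 3 * η * bitSpread i)
  nlinarith

/-- Take dyadic levels `s ≤ t` with `η 4 ^ s ≈ r` and `η 4 ^ t ≈ D`. Teeth in a common group of
`2 ^ s` consecutive ones are closer than `r`, and teeth in different groups of `2 ^ t` are farther
apart than `D`; so the points of `T` lie in one group at level `t` and in distinct groups at level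
`s`, which leaves room for `2 ^ (t - s) ≈ √(D / r)` of them. -/
lemma card_sq_le_of_subset_comb {r D : ℝ} (hη : 0 < η) (hr : 0 < r) (hrD : r ≤ D)
    (T : Finset ℝ²) (hT : ↑T ⊆ range (combPt u η))
    (hsep : (T : Set ℝ²).Pairwise fun v w => r < dist v w)
    (hdiam : ∀ v ∈ T, ∀ w ∈ T, dist v w ≤ D) : (T.card : ℝ) ^ 2 ≤ 16 * D / r := by
  classical
  obtain ⟨J, -, rfl⟩ := (Finset.subset_set_image_iff (s := univ)).mp (by rwa [image_univ])
  rw [Finset.card_image_of_injective _ (combPt_injective hη)]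
  have hmem {j : ℕ} (hj : j ∈ J) : combPt u η j ∈ J.image (combPt u η) :=
    Finset.mem_image_of_mem _ hj
  have h4 : (1 : ℝ) < 4 := by norm_num
  obtain ⟨s, hrs, hs⟩ := exists_le_mul_pow (by positivity : 0 < 8 * η) h4 r
  obtain ⟨t, hDt, ht⟩ := exists_le_mul_pow (by positivity : 0 < 2 * η) h4 D
  have hinj : Set.InjOn (· / 2 ^ s) J := by
    intro i hi j hj hij
    by_contra hne
    have hlt := hsep (hmem hi) (hmem hj) fun h => hne (combPt_injective hη h)
    rcases hs with rfl | hs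
    · exact hne (by simpa using hij)
    · linarith [dist_combPt_lt (u := u) hη hij]
  have hconst : ∀ i ∈ J, ∀ j ∈ J, i / 2 ^ t = j / 2 ^ t := by
    intro i hi j hj
    by_contra hne
    linarith [lt_dist_combPt (u := u) hη hne, hdiam _ (hmem hi) _ (hmem hj)]
  have hcard : (J.card : ℝ) ≤ 2 ^ (t - s) := by exact_mod_cast card_le_two_pow_sub J hinj hconst
  rw [le_div_iff₀ hr]
  calc (J.card : ℝ) ^ 2 * r ≤ (2 ^ (t - s)) ^ 2 * r := by gcongr
    _ = 4 ^ (t - s) * r := by rw [← pow_mul, mul_comm (t - s), pow_mul]; norm_num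
    _ ≤ 16 * D := by
      rcases le_or_gt t s with hts | hts
      · rw [Nat.sub_eq_zero_of_le hts, pow_zero, one_mul]
        linarith
      · have hsplit : (4 : ℝ) ^ (t - s) * 4 ^ s = 4 ^ t := by
          rw [← pow_add, Nat.sub_add_cancel hts.le]
        have := mul_le_mul_of_nonneg_left hrs (pow_nonneg (by norm_num : (0 : ℝ) ≤ 4) (t - s))
        nlinarith [ht.resolve_left (by omega)]

lemma abs_sub_lt_of_floor_div_eq {a b c : ℝ} (ha : 0 ≤ a) (hb : 0 ≤ b) (hc : 0 < c)
    (h : ⌊a / c⌋₊ = ⌊b / c⌋₊) : |a - b| < c := by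
  have h' : ⌊a / c⌋ = ⌊b / c⌋ := by
    rw [← Int.natCast_floor_eq_floor (by positivity), ← Int.natCast_floor_eq_floor (by positivity),
      h]
  have := Int.abs_sub_lt_one_of_floor_eq_floor h'
  rwa [← sub_div, abs_div, abs_of_pos hc, div_lt_one hc] at this

lemma card_le_of_mem_square {r : ℝ} (hr : 0 < r) (n : ℕ) (T : Finset ℝ²)
    (hsep : (T : Set ℝ²).Pairwise fun v w => r < dist v w)
    (hT : ∀ v ∈ T, ∀ i, 0 ≤ v i ∧ v i < n * (r / 2)) : T.card ≤ n ^ 2 := by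
  have hr2 : 0 < r / 2 := half_pos hr
  let cell : ℝ² → ℕ × ℕ := fun v => (⌊v 0 / (r / 2)⌋₊, ⌊v 1 / (r / 2)⌋₊)
  have hmaps : ∀ v ∈ T, cell v ∈ Finset.range n ×ˢ Finset.range n := by
    intro v hv
    simp only [cell, Finset.mem_product, Finset.mem_range]
    refine ⟨(Nat.floor_lt ?_).mpr ?_, (Nat.floor_lt ?_).mpr ?_⟩ <;>
      first
      | exact div_nonneg (hT v hv _).1 hr2.le
      | exact (div_lt_iff₀ hr2).mpr (hT v hv _).2
  have hinj : Set.InjOn cell T := by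
    intro v hv w hw hvw
    simp only [cell, Prod.mk.injEq] at hvw
    by_contra hne
    have h0 := abs_sub_lt_of_floor_div_eq (hT v hv 0).1 (hT w hw 0).1 hr2 hvw.1
    have h1 := abs_sub_lt_of_floor_div_eq (hT v hv 1).1 (hT w hw 1).1 hr2 hvw.2
    linarith [hsep hv hw hne, dist_le_abs_add_abs v w]
  simpa [sq] using Finset.card_le_card_of_injOn cell hmaps hinj

lemma sum_sqrt_half_pow_le {R : ℝ} (S : Finset ℕ) (hS : ∀ k ∈ S, (1 / 2 : ℝ) ^ k ≤ R) :
    ∑ k ∈ S, √((1 / 2 : ℝ) ^ k) ≤ 4 * √R := by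
  rcases S.eq_empty_or_nonempty with rfl | hne
  · simp
  set q : ℝ := √(1 / 2)
  have hq : q ^ 2 = 1 / 2 := Real.sq_sqrt (by norm_num)
  have hq0 : 0 ≤ q := Real.sqrt_nonneg _
  have hq1 : q ≤ 3 / 4 := by nlinarith
  have hsqrt (k : ℕ) : √((1 / 2 : ℝ) ^ k) = q ^ k := by
    rw [← hq, ← pow_mul, mul_comm, pow_mul, Real.sqrt_sq (by positivity)]
  set m := S.min' hne
  have hsub : S ⊆ Finset.Ico m (S.max' hne + 1) := fun k hk =>
    Finset.mem_Ico.mpr ⟨S.min'_le k hk, Nat.lt_succ_of_le (S.le_max' k hk)⟩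
  calc ∑ k ∈ S, √((1 / 2 : ℝ) ^ k) = ∑ k ∈ S, q ^ k := Finset.sum_congr rfl fun k _ => hsqrt k
    _ ≤ ∑ k ∈ Finset.Ico m (S.max' hne + 1), q ^ k :=
        Finset.sum_le_sum_of_subset_of_nonneg hsub fun k _ _ => by positivity
    _ ≤ q ^ m / (1 - q) := geom_sum_Ico_le_of_lt_one hq0 (by linarith)
    _ ≤ 4 * q ^ m := by
        rw [div_le_iff₀ (by linarith)]
        nlinarith [pow_nonneg hq0 m]
    _ ≤ 4 * √R := by
        rw [← hsqrt]
        gcongr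
        exact hS m (S.min'_mem hne)

noncomputable def spacing (k : ℕ) : ℝ := (1 / 2) ^ (k + 2 * k ^ 2 + 1)

noncomputable def blockPt (k j : ℕ) : ℝ² := combPt ((1 / 2) ^ k) (spacing k) j

def block (k : ℕ) : Set ℝ² := blockPt k '' Iio (2 ^ k ^ 2)

def combSet : Set ℝ² := ⋃ k, block k

lemma spacing_pos (k : ℕ) : 0 < spacing k := by unfold spacing; positivity

lemma spacing_mul_two_pow (k : ℕ) : spacing k * 2 ^ k ^ 2 = (1 / 2) ^ (k + k ^ 2 + 1) := by
  rw [spacing, show k + 2 * k ^ 2 + 1 = (k + k ^ 2 + 1) + k ^ 2 by ring, pow_add, mul_assoc,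
    ← mul_pow]
  norm_num

lemma spacing_mul_four_pow (k : ℕ) : spacing k * 4 ^ k ^ 2 = (1 / 2) ^ (k + 1) := by
  rw [spacing, show k + 2 * k ^ 2 + 1 = (k + 1) + 2 * k ^ 2 by ring, pow_add, pow_mul, mul_assoc,
    ← mul_pow]
  norm_num

lemma mem_block_iff {k : ℕ} {v : ℝ²} : v ∈ block k ↔ ∃ j < 2 ^ k ^ 2, blockPt k j = v := by
  simp [block]

lemma block_subset_range (k : ℕ) : block k ⊆ range (combPt ((1 / 2) ^ k) (spacing k)) :=
  image_subset_range _ _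

lemma coords_of_mem_block {k : ℕ} {v : ℝ²} (hv : v ∈ block k) :
    (1 / 2) ^ k ≤ v 0 ∧ v 0 < (1 / 2) ^ k + (1 / 2) ^ (k + 1) ∧ 0 ≤ v 1 ∧
      v 1 < (1 / 2) ^ (k + 1) := by
  obtain ⟨j, hj, rfl⟩ := mem_block_iff.mp hv
  have hη := spacing_pos k
  have hx : j * spacing k < (1 / 2) ^ (k + 1) := by
    calc j * spacing k < 2 ^ k ^ 2 * spacing k := by gcongr; exact_mod_cast hj
      _ = (1 / 2) ^ (k + k ^ 2 + 1) := by rw [mul_comm, spacing_mul_two_pow]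
      _ ≤ (1 / 2) ^ (k + 1) := pow_le_pow_of_le_one (by norm_num) (by norm_num) (by omega)
  have hy : 3 * spacing k * bitSpread j < (1 / 2) ^ (k + 1) := by
    have : 3 * (bitSpread j : ℝ) < 4 ^ k ^ 2 := by exact_mod_cast three_mul_bitSpread_lt _ _ hj
    rw [← spacing_mul_four_pow]
    nlinarith
  simp only [blockPt, combPt_zero, combPt_one]
  refine ⟨?_, ?_, by positivity, hy⟩ <;> nlinarith

lemma dist_le_of_mem_block {k : ℕ} {v w : ℝ²} (hv : v ∈ block k) (hw : w ∈ block k) :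
    dist v w ≤ (1 / 2) ^ k := by
  obtain ⟨hv₁, hv₂, hv₃, hv₄⟩ := coords_of_mem_block hv
  obtain ⟨hw₁, hw₂, hw₃, hw₄⟩ := coords_of_mem_block hw
  have h0 : |v 0 - w 0| ≤ (1 / 2) ^ (k + 1) := abs_sub_le_iff.mpr ⟨by linarith, by linarith⟩
  have h1 : |v 1 - w 1| ≤ (1 / 2) ^ (k + 1) := abs_sub_le_iff.mpr ⟨by linarith, by linarith⟩
  calc dist v w ≤ |v 0 - w 0| + |v 1 - w 1| := dist_le_abs_add_abs v w
    _ ≤ (1 / 2) ^ (k + 1) + (1 / 2) ^ (k + 1) := add_le_add h0 h1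
    _ = (1 / 2) ^ k := by rw [pow_succ]; ring

lemma lt_dist_of_mem_block {a k : ℕ} {v w : ℝ²} (hv : v ∈ block a) (hw : w ∈ block k)
    (hak : a + 2 ≤ k) : 2 * (1 / 2) ^ k < dist v w := by
  obtain ⟨hv₁, -⟩ := coords_of_mem_block hv
  obtain ⟨-, hw₂, -⟩ := coords_of_mem_block hw
  have hak' : (1 / 2 : ℝ) ^ k ≤ (1 / 2) ^ (a + 2) :=
    pow_le_pow_of_le_one (by norm_num) (by norm_num) hak
  have hpos : (0 : ℝ) < (1 / 2) ^ k := by positivity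
  rw [pow_succ] at hw₂
  rw [pow_add] at hak'
  linarith [le_abs_self (v 0 - w 0), abs_sub_le_dist v w 0]

lemma combSet_subset_closedBall : combSet ⊆ closedBall 0 2 := by
  intro v hv
  obtain ⟨k, hv⟩ := mem_iUnion.mp hv
  obtain ⟨h₁, h₂, h₃, h₄⟩ := coords_of_mem_block hv
  have hk : (1 / 2 : ℝ) ^ k ≤ 1 := pow_le_one₀ (by norm_num) (by norm_num)
  rw [pow_succ] at h₂ h₄
  have := dist_le_abs_add_abs v 0
  simp only [PiLp.zero_apply, sub_zero] at this
  rw [abs_of_nonneg ((by positivity : (0 : ℝ) ≤ (1 / 2) ^ k).trans h₁), abs_of_nonneg h₃]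
    at this
  rw [mem_closedBall]
  linarith

lemma isBounded_combSet : Bornology.IsBounded combSet :=
  isBounded_closedBall.subset combSet_subset_closedBall

variable {r R : ℝ}

lemma exists_half_pow_le_iff (hr : 0 < r) : ∃ K : ℕ, ∀ k, (1 / 2 : ℝ) ^ k ≤ r ↔ K ≤ k := by
  classical
  have hex : ∃ n : ℕ, (1 / 2 : ℝ) ^ n ≤ r :=
    (exists_pow_lt_of_lt_one hr (by norm_num : (1 / 2 : ℝ) < 1)).imp fun _ h => h.le
  exact ⟨Nat.find hex, fun k => ⟨Nat.find_min' hex, fun h =>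
    (pow_le_pow_of_le_one (by norm_num) (by norm_num) h).trans (Nat.find_spec hex)⟩⟩

lemma card_le_two_of_forall_le_add_one (S : Finset ℕ) (h : ∀ i ∈ S, ∀ j ∈ S, i ≤ j + 1) :
    S.card ≤ 2 := by
  rcases S.eq_empty_or_nonempty with rfl | hne
  · simp
  calc S.card ≤ (Finset.Icc (S.min' hne) (S.min' hne + 1)).card :=
        Finset.card_le_card fun i hi => Finset.mem_Icc.mpr
          ⟨S.min'_le i hi, h i hi _ (S.min'_mem hne)⟩
    _ = 2 := by rw [Nat.card_Icc]; omega

section Counting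

open scoped Classical

variable (T : Finset ℝ²)

lemma card_filter_small_blocks_le (hsep : (T : Set ℝ²).Pairwise fun v w => r < dist v w)
    (hr : 0 < r) :
    (T.filter fun v => ∃ k, (1 / 2 : ℝ) ^ k ≤ r ∧ v ∈ block k).card ≤ 9 := by
  refine card_le_of_mem_square hr 3 _
    (hsep.mono (Finset.coe_subset.mpr (Finset.filter_subset _ _))) ?_
  intro v hv
  obtain ⟨-, k, hkr, hvk⟩ := Finset.mem_filter.mp hv
  obtain ⟨h₁, h₂, h₃, h₄⟩ := coords_of_mem_block hvk
  rw [pow_succ] at h₂ h₄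
  have : (0 : ℝ) ≤ (1 / 2) ^ k := by positivity
  rw [Fin.forall_fin_two]
  push_cast
  exact ⟨⟨by linarith, by linarith⟩, ⟨h₃, by linarith⟩⟩

lemma card_filter_block_le (hsep : (T : Set ℝ²).Pairwise fun v w => r < dist v w)
    (hr : 0 < r) {k : ℕ} {D : ℝ} (hrD : r ≤ D)
    (hdiam : ∀ v ∈ T, ∀ w ∈ T, v ∈ block k → w ∈ block k → dist v w ≤ D) :
    ((T.filter (· ∈ block k)).card : ℝ) ≤ 4 * √(D / r) := by
  have hsq := card_sq_le_of_subset_comb (spacing_pos k) hr hrD (T.filter (· ∈ block k))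
    (fun v hv => block_subset_range k (Finset.mem_filter.mp hv).2)
    (hsep.mono (Finset.coe_subset.mpr (Finset.filter_subset _ _)))
    fun v hv w hw => hdiam v (Finset.mem_filter.mp hv).1 w (Finset.mem_filter.mp hw).1
      (Finset.mem_filter.mp hv).2 (Finset.mem_filter.mp hw).2
  rw [show 4 * √(D / r) = √(16 * D / r) by
    rw [mul_div_assoc, Real.sqrt_mul (by norm_num), show (16 : ℝ) = 4 ^ 2 by norm_num,
      Real.sqrt_sq (by norm_num)]]
  exact Real.le_sqrt_of_sq_le hsq

lemma sum_card_filter_medium_blocks_le (hsep : (T : Set ℝ²).Pairwise fun v w => r < dist v w)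
    (hr : 0 < r) (S : Finset ℕ)
    (hS : ∀ k ∈ S, r < (1 / 2 : ℝ) ^ k ∧ (1 / 2 : ℝ) ^ k ≤ R) :
    ∑ k ∈ S, ((T.filter (· ∈ block k)).card : ℝ) ≤ 16 * √(R / r) := by
  calc ∑ k ∈ S, ((T.filter (· ∈ block k)).card : ℝ)
      ≤ ∑ k ∈ S, 4 / √r * √((1 / 2 : ℝ) ^ k) := Finset.sum_le_sum fun k hk => by
        refine (card_filter_block_le T hsep hr (hS k hk).1.le
          fun v _ w _ hv hw => dist_le_of_mem_block hv hw).trans_eq ?_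
        rw [Real.sqrt_div' _ hr.le]
        ring
    _ ≤ 4 / √r * (4 * √R) := by
        rw [← Finset.mul_sum]
        gcongr
        exact sum_sqrt_half_pow_le S fun k hk => (hS k hk).2
    _ = 16 * √(R / r) := by rw [Real.sqrt_div' _ hr.le]; ring

/-- At most two blocks of size larger than `R` meet a ball of radius `R`. -/
lemma sum_card_filter_large_blocks_le (hsep : (T : Set ℝ²).Pairwise fun v w => r < dist v w)
    (hr : 0 < r) (hrR : r ≤ R) {x : ℝ²}
    (hT : ↑T ⊆ closedBall x R) (S : Finset ℕ) (hS : ∀ k ∈ S, R < (1 / 2 : ℝ) ^ k) :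
    ∑ k ∈ S, ((T.filter (· ∈ block k)).card : ℝ) ≤ 12 * √(R / r) := by
  classical
  have hdiam : ∀ v ∈ T, ∀ w ∈ T, dist v w ≤ 2 * R := fun v hv w hw => by
    linarith [dist_triangle_right v w x, mem_closedBall.mp (hT hv), mem_closedBall.mp (hT hw)]
  have hterm (k : ℕ) : ((T.filter (· ∈ block k)).card : ℝ) ≤ 6 * √(R / r) := by
    refine (card_filter_block_le T hsep hr (by linarith)
      fun v hv w hw _ _ => hdiam v hv w hw).trans ?_
    rw [mul_div_assoc, Real.sqrt_mul zero_le_two, ← mul_assoc]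
    gcongr
    nlinarith [Real.sq_sqrt zero_le_two, Real.sqrt_nonneg 2]
  set S' := S.filter fun k => (T.filter (· ∈ block k)).Nonempty
  have hS' : S'.card ≤ 2 := by
    refine card_le_two_of_forall_le_add_one S' fun i hi j hj => ?_
    simp only [S', Finset.mem_filter] at hi hj
    obtain ⟨v, hv⟩ := hj.2
    obtain ⟨w, hw⟩ := hi.2
    rw [Finset.mem_filter] at hv hw
    by_contra! hji
    linarith [lt_dist_of_mem_block hv.2 hw.2 (by omega), hdiam v hv.1 w hw.1, hS i hi.1]
  calc ∑ k ∈ S, ((T.filter (· ∈ block k)).card : ℝ)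
      = ∑ k ∈ S', ((T.filter (· ∈ block k)).card : ℝ) :=
        (Finset.sum_filter_of_ne fun k _ h =>
          Finset.card_pos.mp (Nat.pos_of_ne_zero (by exact_mod_cast h))).symm
    _ ≤ ∑ _k ∈ S', 6 * √(R / r) := Finset.sum_le_sum fun k _ => hterm k
    _ ≤ 2 * (6 * √(R / r)) := by
        rw [Finset.sum_const, nsmul_eq_mul]
        gcongr
        exact_mod_cast hS'
    _ = 12 * √(R / r) := by ring

/-- Blocks smaller than `r` contribute boundedly many points, blocks between `r` and `R` form a
geometric series, and only two blocks larger than `R` can meet the ball. -/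
lemma card_le_of_subset_combSet (hsep : (T : Set ℝ²).Pairwise fun v w => r < dist v w)
    (hr : 0 < r) (hrR : r ≤ R) {x : ℝ²}
    (hT : ↑T ⊆ combSet ∩ closedBall x R) : (T.card : ℝ) ≤ 37 * √(R / r) := by
  classical
  obtain ⟨K, hK⟩ := exists_half_pow_le_iff hr
  set small := T.filter fun v => ∃ k, (1 / 2 : ℝ) ^ k ≤ r ∧ v ∈ block k
  have hcover : T ⊆ small ∪ (Finset.range K).biUnion fun k => T.filter (· ∈ block k) := by
    intro v hv
    obtain ⟨k, hvk⟩ := mem_iUnion.mp (hT hv).1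
    by_cases hkr : (1 / 2 : ℝ) ^ k ≤ r
    · exact Finset.mem_union_left _ (Finset.mem_filter.mpr ⟨hv, k, hkr, hvk⟩)
    · refine Finset.mem_union_right _
        (Finset.mem_biUnion.mpr ⟨k, ?_, Finset.mem_filter.mpr ⟨hv, hvk⟩⟩)
      exact Finset.mem_range.mpr (not_le.mp fun h => hkr ((hK k).mpr h))
  have hcard : (T.card : ℝ) ≤
      small.card + ∑ k ∈ Finset.range K, ((T.filter (· ∈ block k)).card : ℝ) := by
    exact_mod_cast (Finset.card_le_card hcover).trans
      ((Finset.card_union_le _ _).trans (Nat.add_le_add_left Finset.card_biUnion_le _))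
  have hlt : ∀ k ∈ Finset.range K, r < (1 / 2 : ℝ) ^ k := fun k hk =>
    not_le.mp fun h => (Finset.mem_range.mp hk).not_ge ((hK k).mp h)
  rw [← Finset.sum_filter_add_sum_filter_not _ fun k => (1 / 2 : ℝ) ^ k ≤ R] at hcard
  have hmedium := sum_card_filter_medium_blocks_le (R := R) T hsep hr
    ((Finset.range K).filter fun k => (1 / 2 : ℝ) ^ k ≤ R)
    fun k hk => ⟨hlt k (Finset.mem_filter.mp hk).1, (Finset.mem_filter.mp hk).2⟩
  have hlarge := sum_card_filter_large_blocks_le T hsep hr hrR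
    (fun v hv => (hT hv).2) ((Finset.range K).filter fun k => ¬(1 / 2 : ℝ) ^ k ≤ R)
    fun k hk => not_le.mp (Finset.mem_filter.mp hk).2
  have hsmall : (small.card : ℝ) ≤ 9 := by exact_mod_cast card_filter_small_blocks_le T hsep hr
  have hone : 1 ≤ √(R / r) := Real.one_le_sqrt.mpr ((one_le_div hr).mpr hrR)
  linarith

end Counting

lemma coverNumLoc_combSet_le (hr : 0 < r) (hrR : r ≤ R) :
    (coverNumLoc combSet r R : ℝ) ≤ 37 * (R / r) ^ (1 / 2 : ℝ) := by
  rw [← Real.sqrt_eq_rpow]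
  refine coverNumLoc_le (by positivity) fun x _ => ?_
  refine (Nat.cast_le.mpr (coverNum_le_of_separated hr.le _ fun T hT hsep => ?_)).trans
    (Nat.floor_le (by positivity))
  exact Nat.le_floor (card_le_of_subset_combSet T hsep hr hrR hT)

lemma mem_combSet {k j : ℕ} (hj : j < 2 ^ k ^ 2) : blockPt k j ∈ combSet :=
  mem_iUnion.mpr ⟨k, j, hj, rfl⟩

lemma two_pow_le_coverNumLoc_combSet (k : ℕ) :
    (2 : ℝ) ^ k ^ 2 ≤ coverNumLoc combSet ((1 / 2) ^ (k + (2 * k ^ 2 + 2))) ((1 / 2) ^ k) := by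
  have h2r : 2 * (1 / 2 : ℝ) ^ (k + (2 * k ^ 2 + 2)) = spacing k := by
    rw [spacing, show k + (2 * k ^ 2 + 2) = k + 2 * k ^ 2 + 1 + 1 by ring, pow_succ]
    ring
  have hsep (i j : ℕ) (hij : i ≠ j) :
      2 * (1 / 2 : ℝ) ^ (k + (2 * k ^ 2 + 2)) < dist (blockPt k i) (blockPt k j) := by
    have := lt_dist_combPt (u := (1 / 2) ^ k) (s := 0) (spacing_pos k) (by simpa using hij)
    rw [pow_zero, mul_one] at this
    rw [h2r]
    unfold blockPt
    linarith [spacing_pos k]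
  exact_mod_cast le_coverNumLoc_of_separated isBounded_combSet (by positivity)
    (mem_combSet (Nat.two_pow_pos _)) (blockPt k)
    (fun j hj =>
      ⟨mem_combSet hj, dist_le_of_mem_block ⟨j, hj, rfl⟩ ⟨0, Nat.two_pow_pos _, rfl⟩⟩)
    fun i _ j _ hij => hsep i j hij

lemma isBounded_image_fst_combSet : Bornology.IsBounded ((fun p : ℝ² => p 0) '' combSet) := by
  refine isBounded_closedBall (x := (0 : ℝ)) (r := 2) |>.subset ?_
  rintro _ ⟨p, hp, rfl⟩
  have := abs_sub_le_dist p 0 0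
  rw [mem_closedBall, Real.dist_eq]
  simp only [PiLp.zero_apply, sub_zero] at this ⊢
  exact this.trans (combSet_subset_closedBall hp)

lemma two_pow_le_coverNumLoc_image_fst_combSet (k : ℕ) :
    (2 : ℝ) ^ k ^ 2 ≤ coverNumLoc ((fun p : ℝ² => p 0) '' combSet)
      ((1 / 2) ^ (k + k ^ 2 + 1 + (k ^ 2 + 2))) ((1 / 2) ^ (k + k ^ 2 + 1)) := by
  have hη := spacing_pos k
  have h4r : 4 * (1 / 2 : ℝ) ^ (k + k ^ 2 + 1 + (k ^ 2 + 2)) = spacing k := by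
    rw [spacing, show k + k ^ 2 + 1 + (k ^ 2 + 2) = k + 2 * k ^ 2 + 1 + 2 by ring, pow_add]
    ring
  have hmem (j : ℕ) (hj : j < 2 ^ k ^ 2) :
      (1 / 2 : ℝ) ^ k + j * spacing k ∈ (fun p : ℝ² => p 0) '' combSet :=
    ⟨blockPt k j, mem_combSet hj, rfl⟩
  have hball (j : ℕ) (hj : j < 2 ^ k ^ 2) :
      dist ((1 / 2 : ℝ) ^ k + j * spacing k) ((1 / 2) ^ k + (0 : ℕ) * spacing k)
        ≤ (1 / 2) ^ (k + k ^ 2 + 1) := by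
    rw [Real.dist_eq, Nat.cast_zero, zero_mul, add_zero, add_sub_cancel_left,
      abs_of_nonneg (by positivity), ← spacing_mul_two_pow, mul_comm]
    gcongr
    exact_mod_cast hj.le
  have hsep (i j : ℕ) (hij : i ≠ j) : 2 * (1 / 2 : ℝ) ^ (k + k ^ 2 + 1 + (k ^ 2 + 2))
      < dist ((1 / 2 : ℝ) ^ k + i * spacing k) ((1 / 2) ^ k + j * spacing k) := by
    have hij' : (1 : ℝ) ≤ |(i : ℝ) - j| := by
      rcases Nat.lt_or_gt_of_ne hij with h | h
      · have : (i : ℝ) + 1 ≤ j := by exact_mod_cast h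
        exact le_abs.mpr (.inr (by linarith))
      · have : (j : ℝ) + 1 ≤ i := by exact_mod_cast h
        exact le_abs.mpr (.inl (by linarith))
    rw [Real.dist_eq, show (1 / 2 : ℝ) ^ k + i * spacing k - ((1 / 2) ^ k + j * spacing k)
      = (i - j) * spacing k by ring, abs_mul, abs_of_pos hη]
    nlinarith
  exact_mod_cast le_coverNumLoc_of_separated isBounded_image_fst_combSet (by positivity)
    (hmem 0 (Nat.two_pow_pos _)) (fun j : ℕ => (1 / 2 : ℝ) ^ k + j * spacing k)
    (fun j hj => ⟨hmem j hj, hball j hj⟩) fun i _ j _ hij => hsep i j hij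

lemma half_pow_admissible {m n : ℕ} {δ : ℝ} (hδ : 0 ≤ δ) (h : (1 + δ) * m ≤ n) :
    0 < (1 / 2 : ℝ) ^ n ∧ (1 / 2 : ℝ) ^ n ≤ ((1 / 2) ^ m) ^ (1 + δ) ∧
      ((1 / 2 : ℝ) ^ m) ^ (1 + δ) ≤ (1 / 2) ^ m := by
  refine ⟨by positivity, ?_, Real.rpow_le_self_of_le_one (by positivity)
    (pow_le_one₀ (by norm_num) (by norm_num)) (by linarith)⟩
  rw [← Real.rpow_natCast, ← Real.rpow_natCast, ← Real.rpow_mul (by norm_num), mul_comm]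
  exact Real.rpow_le_rpow_of_exponent_ge (by norm_num) (by norm_num) h

lemma half_pow_div_half_pow (m n : ℕ) : (1 / 2 : ℝ) ^ m / (1 / 2) ^ (m + n) = 2 ^ n := by
  rw [pow_add, div_mul_cancel_left₀ (by positivity), one_div, inv_pow, inv_inv]

lemma tendsto_two_pow_comp {f : ℕ → ℕ} (hf : ∀ k, k ≤ f k) :
    Tendsto (fun k => (2 : ℝ) ^ f k) atTop atTop :=
  (tendsto_pow_atTop_atTop_of_one_lt one_lt_two).comp (tendsto_atTop_mono hf tendsto_id)

lemma hUpper_combSet {δ : ℝ} (hδ : δ ∈ Icc (0 : ℝ) 1) : hUpper combSet δ = 1 / 2 := by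
  refine IsLeast.hUpper_eq ⟨mem_upperExponents (by norm_num) (by norm_num : (0 : ℝ) < 37)
    fun r R hr hrR => coverNumLoc_combSet_le hr hrR, fun β hβ => ?_⟩
  refine le_of_mem_upperExponents (r := fun k => (1 / 2) ^ (k + (2 * k ^ 2 + 2)))
    (R := fun k => (1 / 2) ^ k) (by norm_num : (0 : ℝ) < 1 / 2)
    (Eventually.of_forall fun k => half_pow_admissible hδ.1 ?_)
    (tendsto_pow_atTop_nhds_zero_of_lt_one (by norm_num) (by norm_num)) ?_
    (Eventually.of_forall fun k => ?_) hβ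
  · push_cast
    nlinarith [hδ.2, sq_nonneg (k : ℝ)]
  · simp_rw [half_pow_div_half_pow]
    exact tendsto_two_pow_comp fun k => by nlinarith
  · have : (1 / 2 : ℝ) * ((2 : ℝ) ^ (2 * k ^ 2 + 2)) ^ (1 / 2 : ℝ) = 2 ^ k ^ 2 := by
      rw [show 2 * k ^ 2 + 2 = (k ^ 2 + 1) * 2 by ring, pow_mul, ← Real.sqrt_eq_rpow,
        Real.sqrt_sq (by positivity), pow_succ]
      ring
    rw [half_pow_div_half_pow, this]
    exact two_pow_le_coverNumLoc_combSet k

lemma hUpper_image_fst_combSet {δ : ℝ} (hδ : δ ∈ Ico (0 : ℝ) 1) :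
    hUpper ((fun p : ℝ² => p 0) '' combSet) δ = 1 := by
  refine IsLeast.hUpper_eq ⟨mem_upperExponents zero_le_one two_pos
    fun r R hr hrR => coverNumLoc_real_le hr hrR, fun β hβ => ?_⟩
  obtain ⟨N, hN⟩ := exists_nat_ge (δ / (1 - δ))
  have hδ' : 0 < 1 - δ := sub_pos.mpr hδ.2
  refine le_of_mem_upperExponents (r := fun k => (1 / 2) ^ (k + k ^ 2 + 1 + (k ^ 2 + 2)))
    (R := fun k => (1 / 2) ^ (k + k ^ 2 + 1)) (by norm_num : (0 : ℝ) < 1 / 4)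
    ((eventually_ge_atTop N).mono fun k hk => half_pow_admissible hδ.1 ?_)
    ((tendsto_pow_atTop_nhds_zero_of_lt_one (by norm_num) (by norm_num)).comp
      (tendsto_atTop_mono (fun k => show k ≤ _ by nlinarith) tendsto_id)) ?_
    (Eventually.of_forall fun k => ?_) hβ
  · have hk : δ ≤ (1 - δ) * k := (div_le_iff₀' hδ').mp (hN.trans (by exact_mod_cast hk))
    push_cast
    nlinarith [hδ.1, hδ.2, sq_nonneg (k : ℝ), Nat.cast_nonneg (α := ℝ) k]
  · simp_rw [half_pow_div_half_pow]
    exact tendsto_two_pow_comp fun k => by nlinarith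
  · rw [half_pow_div_half_pow, Real.rpow_one, pow_add]
    linarith [two_pow_le_coverNumLoc_image_fst_combSet k]

end QuasiAssouadProjection

/-- There is a bounded planar set whose quasi-Assouad dimension is `1/2` while its orthogonal
projection onto the first coordinate axis has quasi-Assouad dimension `1`; in particular, the
quasi-Assouad dimension can increase under a Lipschitz map. -/
theorem exists_set_qADim_increases_under_projection :
    ∃ E : Set (EuclideanSpace ℝ (Fin 2)), Bornology.IsBounded E ∧
      qADim E = 1 / 2 ∧
      qADim ((fun p : EuclideanSpace ℝ (Fin 2) => p 0) '' E) = 1 := by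
  open QuasiAssouadProjection in
  exact ⟨combSet, isBounded_combSet,
    qADim_eq_of_forall_hUpper_eq fun δ hδ => hUpper_combSet (Ioo_subset_Icc_self hδ),
    qADim_eq_of_forall_hUpper_eq fun δ hδ =>
      hUpper_image_fst_combSet (Ioo_subset_Ico_self hδ)⟩
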